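/- arXiv:1810.12806 — 10 statements merged into one kernel-verified Lean document; each statement's English description precedes it below -/
import Mathlib

section
/- Let d be a positive integer, ρ ≥ 1, and let Φ_{d,ρ} denote the unique positive root of ρ(x+1)^d = x^{d+1}. Then Φ_{d,ρ} ≤ d / W(d/ρ), where W is the principal branch of the Lambert-W function (i.e., W(t) is the unique nonnegative solution of x·e^x = t for t ≥ 0). -/
theorem phi_le_lambertW (d : ℕ) (hd : 0 < d) (ρ : ℝ) (hρ : 1 ≤ ρ)
    (Φ W : ℝ) (hΦpos : 0 < Φ) (hΦ : ρ * (Φ + 1) ^ d = Φ ^ (d + 1))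
    (hWpos : 0 ≤ W) (hW : W * Real.exp W = d / ρ) :
    Φ ≤ d / W := by
  have hρ0 : 0 < ρ := lt_of_lt_of_le one_pos hρ
  have hd0 : (0:ℝ) < d := by exact_mod_cast hd
  have hdρ : 0 < (d:ℝ) / ρ := div_pos hd0 hρ0
  have hW0 : 0 < W := by
    rcases hWpos.lt_or_eq with h | h
    · exact h
    · exfalso; rw [← h] at hW; simp at hW; linarith
  -- key inequality : (d/Φ) * exp (d/Φ) ≥ d/ρ
  have h1 : (1 : ℝ) + 1/Φ ≤ Real.exp (1/Φ) := by
    have := Real.add_one_le_exp (1/Φ); linarith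
  have hbase : (0:ℝ) ≤ 1 + 1/Φ := by positivity
  have hpow : ((Φ + 1)/Φ)^d ≤ Real.exp ((d:ℝ)/Φ) := by
    have : ((Φ + 1)/Φ) = 1 + 1/Φ := by field_simp
    rw [this]
    calc (1 + 1/Φ)^d ≤ (Real.exp (1/Φ))^d := pow_le_pow_left₀ hbase h1 d
      _ = Real.exp ((d:ℝ) * (1/Φ)) := (Real.exp_nat_mul _ d).symm
      _ = Real.exp ((d:ℝ)/Φ) := by rw [mul_one_div]
  have hdiv : (d:ℝ)/ρ = ((d:ℝ)/Φ) * ((Φ + 1)/Φ)^d := by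
    have hΦne : Φ ≠ 0 := ne_of_gt hΦpos
    rw [div_pow]
    rw [pow_succ] at hΦ
    field_simp
    nlinarith [pow_pos hΦpos d, hΦ]
  have key : (d:ℝ)/ρ ≤ ((d:ℝ)/Φ) * Real.exp ((d:ℝ)/Φ) := by
    rw [hdiv]
    exact mul_le_mul_of_nonneg_left hpow (by positivity)
  have hWle : W ≤ (d:ℝ)/Φ := by
    by_contra h
    push_neg at h
    have : ((d:ℝ)/Φ) * Real.exp ((d:ℝ)/Φ) < W * Real.exp W := by
      apply mul_lt_mul h (Real.exp_lt_exp.mpr h).le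
      · exact Real.exp_pos _
      · exact hWpos
    rw [hW] at this
    linarith
  rw [le_div_iff₀ hW0]
  rw [le_div_iff₀ hΦpos] at hWle
  linarith [hWle]
end

section
/- Fix a positive integer d and ε > 0. For every monomial f(t) = t^ν with 0 ≤ ν ≤ d, and all x, x', y, y', z ≥ 0, it holds that y·f(z+x+y) ≤ (1+ε)·y·f(z+x'+y) + (1+1/ε)^d · d^d · x·f(z+x+y'). -/
/-!
Write `b = z + y ≥ y` and fix `t ∈ (0, 1)`. If `x ≤ t y`, then `b + x ≤ (1 + t) b ≤ b / (1 - t)`.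
Otherwise convexity of `u ↦ u ^ ν` applied to `b + x = (1 - t) • (b / (1 - t)) + t • (x / t)`
gives a second term `y t (x / t) ^ ν ≤ x (x / t) ^ ν`. Either way
`y (b + x) ^ ν ≤ y (b / (1 - t)) ^ ν + x (x / t) ^ ν`. For `t = 1 / (d (1 + 1/ε))`, Bernoulli's
inequality gives `(1 - t) ^ ν ≥ 1 - d t = 1 / (1 + ε)`, while `(1 / t) ^ ν ≤ (d (1 + 1/ε)) ^ d`.
-/

theorem mul_add_pow_le_mul_div_one_sub_pow_add (n : ℕ) {t b x y : ℝ} (ht₀ : 0 < t) (ht₁ : t < 1)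
    (hx : 0 ≤ x) (hy : 0 ≤ y) (hyb : y ≤ b) :
    y * (b + x) ^ n ≤ y * (b / (1 - t)) ^ n + x * (x / t) ^ n := by
  have hb : 0 ≤ b := hy.trans hyb
  have ht₁' : 0 < 1 - t := sub_pos.mpr ht₁
  rcases le_or_gt x (t * y) with hsmall | hlarge
  · have hsum : b + x ≤ b / (1 - t) := by
      rw [le_div_iff₀ ht₁']
      nlinarith [mul_le_mul_of_nonneg_left hyb ht₀.le]
    calc y * (b + x) ^ n ≤ y * (b / (1 - t)) ^ n := by gcongr
      _ ≤ _ := le_add_of_nonneg_right (by positivity)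
  · have hconv : (b + x) ^ n ≤ (1 - t) * (b / (1 - t)) ^ n + t * (x / t) ^ n := by
      have := (convexOn_pow n).2 (Set.mem_Ici.mpr (div_nonneg hb ht₁'.le))
        (Set.mem_Ici.mpr (div_nonneg hx ht₀.le)) ht₁'.le ht₀.le (by ring)
      simp only [smul_eq_mul] at this
      rwa [mul_div_cancel₀ _ ht₁'.ne', mul_div_cancel₀ _ ht₀.ne'] at this
    calc y * (b + x) ^ n ≤ y * ((1 - t) * (b / (1 - t)) ^ n + t * (x / t) ^ n) := by gcongr
      _ = (1 - t) * (y * (b / (1 - t)) ^ n) + t * y * (x / t) ^ n := by ring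
      _ ≤ y * (b / (1 - t)) ^ n + x * (x / t) ^ n :=
        add_le_add (mul_le_of_le_one_left (by positivity) (by linarith))
          (mul_le_mul_of_nonneg_right hlarge.le (by positivity))

theorem inv_one_sub_pow_le {n : ℕ} {t ε : ℝ} (hε : 0 < ε) (ht : t ≤ 1)
    (hnt : n * t ≤ ε / (1 + ε)) : ((1 - t) ^ n)⁻¹ ≤ 1 + ε := by
  have hbern : 1 - n * t ≤ (1 - t) ^ n := by
    simpa [sub_eq_add_neg] using one_add_mul_le_pow (a := -t) (by linarith) n
  have hlow : (1 + ε)⁻¹ ≤ 1 - n * t := by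
    have : (1 + ε)⁻¹ = 1 - ε / (1 + ε) := by field_simp; ring
    linarith
  calc ((1 - t) ^ n)⁻¹ ≤ ((1 + ε)⁻¹)⁻¹ := inv_anti₀ (by positivity) (hlow.trans hbern)
    _ = 1 + ε := inv_inv _

theorem monomial_smoothness (d : ℕ) (hd : 0 < d) (ε : ℝ) (hε : 0 < ε)
    (ν : ℕ) (hν : ν ≤ d) (x x' y y' z : ℝ)
    (hx : 0 ≤ x) (hx' : 0 ≤ x') (hy : 0 ≤ y) (hy' : 0 ≤ y') (hz : 0 ≤ z) :
    y * (z + x + y) ^ ν ≤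
      (1 + ε) * y * (z + x' + y) ^ ν +
      (1 + 1 / ε) ^ d * (d : ℝ) ^ d * (x * (z + x + y') ^ ν) := by
  set c : ℝ := d * (1 + 1 / ε) with hc
  have hc₁ : 1 < c := by
    have : (1 : ℝ) ≤ d := by exact_mod_cast hd
    nlinarith [show 0 < 1 / ε by positivity]
  have ht₀ : 0 < 1 / c := by positivity
  have ht₁ : 1 / c < 1 := (div_lt_one (by positivity)).mpr hc₁
  have hmain := mul_add_pow_le_mul_div_one_sub_pow_add ν ht₀ ht₁ hx hy
    (le_add_of_nonneg_left hz : y ≤ z + y)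
  have hfirst : ((z + y) / (1 - 1 / c)) ^ ν ≤ (1 + ε) * (z + x' + y) ^ ν := by
    have hνt : ν * (1 / c) ≤ ε / (1 + ε) := by
      calc ν * (1 / c) ≤ d * (1 / c) := by gcongr
        _ = ε / (1 + ε) := by rw [hc]; field_simp; ring
    rw [div_pow, div_eq_inv_mul]
    gcongr
    · exact inv_one_sub_pow_le hε ht₁.le hνt
    · linarith
  have hsecond : (x / (1 / c)) ^ ν ≤ (1 + 1 / ε) ^ d * (d : ℝ) ^ d * (z + x + y') ^ ν := by
    rw [show (1 + 1 / ε) ^ d * (d : ℝ) ^ d = c ^ d by rw [hc, mul_pow, mul_comm],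
      div_div_eq_mul_div, div_one, mul_comm x, mul_pow]
    exact mul_le_mul (pow_le_pow_right₀ hc₁.le hν) (pow_le_pow_left₀ hx (by linarith) ν)
      (by positivity) (by positivity)
  calc y * (z + x + y) ^ ν = y * ((z + y) + x) ^ ν := by ring_nf
    _ ≤ _ := hmain
    _ ≤ y * ((1 + ε) * (z + x' + y) ^ ν)
        + x * ((1 + 1 / ε) ^ d * (d : ℝ) ^ d * (z + x + y') ^ ν) := by gcongr
    _ = _ := by ring
end

section
/- Let d be a positive integer, ε > 0, and ν a positive integer with ν ≤ d. Then for all z > 0: z(z+1)^ν − (1+ε)z^{ν+1} ≤ (1+1/ε)^d · d^d. -/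
open Set

/-!
Bound `z (z + 1)^ν` by `(z + 1)^(ν+1)` and split `z + 1 = (1 - s) · z/(1 - s) + s · 1/s` with
`s = 1/(ν (1 + 1/ε))`. Convexity of `x ↦ x^(ν+1)` gives
`(z + 1)^(ν+1) ≤ z^(ν+1)/(1 - s)^ν + 1/s^ν`, Bernoulli's inequality gives
`(1 - s)^ν ≥ 1 - ν s = 1/(1 + ε)`, and `1/s^ν = (ν (1 + 1/ε))^ν ≤ (d (1 + 1/ε))^d`.
-/

theorem add_pow_succ_le_div_pow_add_div_pow {a b s : ℝ} (ha : 0 ≤ a) (hb : 0 ≤ b)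
    (hs₀ : 0 < s) (hs₁ : s < 1) (n : ℕ) :
    (a + b) ^ (n + 1) ≤ a ^ (n + 1) / (1 - s) ^ n + b ^ (n + 1) / s ^ n := by
  have ht : 0 < 1 - s := sub_pos.mpr hs₁
  have hweight : ∀ t x : ℝ, t ≠ 0 → t * (x / t) ^ (n + 1) = x ^ (n + 1) / t ^ n := by
    intro t x ht
    rw [div_pow, pow_succ t]
    field_simp
  have hconv := (convexOn_pow (𝕜 := ℝ) (n + 1)).2 (mem_Ici.mpr (div_nonneg ha ht.le))
    (mem_Ici.mpr (div_nonneg hb hs₀.le)) ht.le hs₀.le (sub_add_cancel 1 s)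
  simp only [smul_eq_mul, mul_div_cancel₀ _ ht.ne', mul_div_cancel₀ _ hs₀.ne'] at hconv
  rwa [hweight _ _ ht.ne', hweight _ _ hs₀.ne'] at hconv

theorem mul_add_one_pow_le {ν : ℕ} (hν : 0 < ν) {ε z : ℝ} (hε : 0 < ε) (hz : 0 ≤ z) :
    z * (z + 1) ^ ν ≤ (1 + ε) * z ^ (ν + 1) + (ν * (1 + 1 / ε)) ^ ν := by
  set c : ℝ := ν * (1 + 1 / ε) with hc
  have hc₁ : 1 < c := by
    have : (1 : ℝ) ≤ ν := Nat.one_le_cast.mpr hν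
    have : 0 < 1 / ε := by positivity
    nlinarith
  have hs₀ : 0 < 1 / c := by positivity
  have hs₁ : 1 / c < 1 := (div_lt_one (by linarith)).mpr hc₁
  have hbernoulli : 1 / (1 + ε) ≤ (1 - 1 / c) ^ ν :=
    calc 1 / (1 + ε) = 1 + ν * (-(1 / c)) := by rw [hc]; field_simp; ring
      _ ≤ (1 + -(1 / c)) ^ ν := one_add_mul_le_pow (by linarith) ν
      _ = (1 - 1 / c) ^ ν := by rw [← sub_eq_add_neg]
  have hsplit := add_pow_succ_le_div_pow_add_div_pow hz zero_le_one hs₀ hs₁ ν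
  have hcoef : z ^ (ν + 1) / (1 - 1 / c) ^ ν ≤ (1 + ε) * z ^ (ν + 1) := by
    rw [div_le_iff₀ (by positivity)]
    calc z ^ (ν + 1) = (1 + ε) * z ^ (ν + 1) * (1 / (1 + ε)) := by field_simp
      _ ≤ (1 + ε) * z ^ (ν + 1) * (1 - 1 / c) ^ ν := by gcongr
  calc z * (z + 1) ^ ν ≤ (z + 1) * (z + 1) ^ ν := by gcongr; linarith
    _ = (z + 1) ^ (ν + 1) := (pow_succ' _ _).symm
    _ ≤ z ^ (ν + 1) / (1 - 1 / c) ^ ν + 1 ^ (ν + 1) / (1 / c) ^ ν := hsplit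
    _ ≤ (1 + ε) * z ^ (ν + 1) + c ^ ν := by rw [one_pow, one_div_pow, one_div_one_div]; linarith

theorem z_bound_general (d ν : ℕ) (hν : 0 < ν) (hνd : ν ≤ d)
    (ε z : ℝ) (hε : 0 < ε) (hz : 0 < z) :
    z * (z + 1) ^ ν - (1 + ε) * z ^ (ν + 1) ≤ (1 + 1 / ε) ^ d * (d : ℝ) ^ d := by
  have hmain := mul_add_one_pow_le hν hε hz.le
  have hc : 1 ≤ (ν : ℝ) * (1 + 1 / ε) :=
    one_le_mul_of_one_le_of_one_le (Nat.one_le_cast.mpr hν) (by simp [hε.le])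
  have hmono : ((ν : ℝ) * (1 + 1 / ε)) ^ ν ≤ (1 + 1 / ε) ^ d * (d : ℝ) ^ d := by
    calc ((ν : ℝ) * (1 + 1 / ε)) ^ ν ≤ ((ν : ℝ) * (1 + 1 / ε)) ^ d := pow_le_pow_right₀ hc hνd
      _ ≤ ((d : ℝ) * (1 + 1 / ε)) ^ d := by gcongr
      _ = (1 + 1 / ε) ^ d * (d : ℝ) ^ d := by rw [mul_pow, mul_comm]
  linarith

theorem z_bound (d ν : ℕ) (hd : 0 < d) (hν : 0 < ν) (hνd : ν ≤ d)
    (ε z : ℝ) (hε : 0 < ε) (hz : 0 < z) :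
    z * (z + 1) ^ ν - (1 + ε) * z ^ (ν + 1) ≤ (1 + 1 / ε) ^ d * (d : ℝ) ^ d :=
  z_bound_general d ν hν hνd ε z hε hz
end

section
/- Let d be a positive integer, ρ ≥ 1, and Φ_{d,ρ} the unique positive root of ρ(x+1)^d = x^{d+1}. With μ̂ = ρ·d·(Φ_{d,ρ}+1)^{d−1} / ((d+1)·Φ_{d,ρ}^d), the function x ↦ ρ(x+1)^d − μ̂·x^{d+1} attains its maximum over x ≥ 0 at x = Φ_{d,ρ}, and this maximum value equals (1−μ̂)·Φ_{d,ρ}^{d+1}. -/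
/-!
Put `a = 1 / (Φ + 1)` and `v = x / Φ`, so that `(x + 1) / (Φ + 1) = a + (1 - a) v`. The root equation
turns `ρ (x + 1)^d` into `Φ^(d+1) (a + (1 - a) v)^d` and `μ` into `d (1 - a) / (d + 1)`, so after dividing
by `Φ^(d+1)` the claim becomes `(a + (1 - a) v)^d ≤ 1 - μ + μ v^(d+1)`. This follows from convexity of
`t ↦ t^d` between `1` and `v`, followed by the AM-GM inequality `(d + 1) v^d ≤ d v^(d+1) + 1`.
Equality holds at `v = 1`, i.e. `x = Φ`.
-/

theorem add_one_mul_pow_le_mul_pow_succ_add_one (n : ℕ) {v : ℝ} (hv : 0 ≤ v) :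
    (n + 1) * v ^ n ≤ n * v ^ (n + 1) + 1 := by
  induction n with
  | zero => simp
  | succ n ih =>
    have hsign : 0 ≤ (v ^ (n + 1) - 1) * (v - 1) := by
      rcases le_total v 1 with h | h
      · exact mul_nonneg_of_nonpos_of_nonpos (by linarith [pow_le_one₀ hv h (n := n + 1)])
          (by linarith)
      · exact mul_nonneg (by linarith [one_le_pow₀ h (n := n + 1)]) (by linarith)
    push_cast
    linear_combination mul_le_mul_of_nonneg_right ih hv + hsign

theorem pow_convex_comb_le_add_mul_pow_succ (n : ℕ) {a v : ℝ} (ha₀ : 0 ≤ a) (ha₁ : a ≤ 1)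
    (hv : 0 ≤ v) :
    (a + (1 - a) * v) ^ n ≤ 1 - n * (1 - a) / (n + 1) + n * (1 - a) / (n + 1) * v ^ (n + 1) := by
  have hjensen : (a + (1 - a) * v) ^ n ≤ a + (1 - a) * v ^ n := by
    simpa using (convexOn_pow n).2 (Set.mem_Ici.2 zero_le_one) (Set.mem_Ici.2 hv) ha₀
      (sub_nonneg.2 ha₁) (add_sub_cancel a 1)
  have hn : (0 : ℝ) < n + 1 := by positivity
  calc (a + (1 - a) * v) ^ n ≤ a + (1 - a) * v ^ n := hjensen
    _ ≤ a + (1 - a) * ((n * v ^ (n + 1) + 1) / (n + 1)) := by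
      gcongr
      rw [le_div_iff₀ hn]
      linarith [add_one_mul_pow_le_mul_pow_succ_add_one n hv]
    _ = _ := by field_simp; ring

theorem mul_pow_pred_div_eq_of_mul_add_one_pow_eq {d : ℕ} (hd : 0 < d) {ρ Φ : ℝ} (hΦpos : 0 < Φ)
    (hΦ : ρ * (Φ + 1) ^ d = Φ ^ (d + 1)) :
    ρ * d * (Φ + 1) ^ (d - 1) / ((d + 1) * Φ ^ d) = d * (1 - 1 / (Φ + 1)) / (d + 1) := by
  obtain ⟨e, rfl⟩ : ∃ e, d = e + 1 := ⟨d - 1, (Nat.succ_pred_eq_of_pos hd).symm⟩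
  rw [pow_succ, ← mul_assoc, pow_succ] at hΦ
  rw [Nat.add_sub_cancel]
  field_simp
  linear_combination hΦ

theorem max_at_phi_general (d : ℕ) (hd : 0 < d) (ρ : ℝ)
    (Φ : ℝ) (hΦpos : 0 < Φ) (hΦ : ρ * (Φ + 1) ^ d = Φ ^ (d + 1)) :
    let μ := ρ * d * (Φ + 1) ^ (d - 1) / (((d : ℝ) + 1) * Φ ^ d)
    (∀ x : ℝ, 0 ≤ x → ρ * (x + 1) ^ d - μ * x ^ (d + 1) ≤ ρ * (Φ + 1) ^ d - μ * Φ ^ (d + 1)) ∧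
      ρ * (Φ + 1) ^ d - μ * Φ ^ (d + 1) = (1 - μ) * Φ ^ (d + 1) := by
  intro μ
  have hμ : μ = d * (1 - 1 / (Φ + 1)) / (d + 1) :=
    mul_pow_pred_div_eq_of_mul_add_one_pow_eq hd hΦpos hΦ
  refine ⟨fun x hx => ?_, by rw [hΦ]; ring⟩
  have hconv : (x + 1) / (Φ + 1) = 1 / (Φ + 1) + (1 - 1 / (Φ + 1)) * (x / Φ) := by
    field_simp; ring
  have hmax := pow_convex_comb_le_add_mul_pow_succ d (a := 1 / (Φ + 1)) (by positivity)
    ((div_le_one (by positivity)).2 (by linarith)) (div_nonneg hx hΦpos.le)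
  rw [← hconv, ← hμ] at hmax
  have hρx : Φ ^ (d + 1) * ((x + 1) / (Φ + 1)) ^ d = ρ * (x + 1) ^ d := by
    rw [div_pow, ← hΦ]; field_simp
  have hμx : Φ ^ (d + 1) * (x / Φ) ^ (d + 1) = x ^ (d + 1) := by
    rw [← mul_pow, mul_div_cancel₀ x hΦpos.ne']
  calc ρ * (x + 1) ^ d - μ * x ^ (d + 1)
      = Φ ^ (d + 1) * (((x + 1) / (Φ + 1)) ^ d - μ * (x / Φ) ^ (d + 1)) := by
        rw [← hρx, ← hμx]; ring
    _ ≤ Φ ^ (d + 1) * (1 - μ) := mul_le_mul_of_nonneg_left (by linarith) (by positivity)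
    _ = ρ * (Φ + 1) ^ d - μ * Φ ^ (d + 1) := by rw [hΦ]; ring

theorem max_at_phi (d : ℕ) (hd : 0 < d) (ρ : ℝ) (hρ : 1 ≤ ρ)
    (Φ : ℝ) (hΦpos : 0 < Φ) (hΦ : ρ * (Φ + 1) ^ d = Φ ^ (d + 1)) :
    let μ := ρ * d * (Φ + 1) ^ (d - 1) / (((d : ℝ) + 1) * Φ ^ d)
    (∀ x : ℝ, 0 ≤ x → ρ * (x + 1) ^ d - μ * x ^ (d + 1) ≤ ρ * (Φ + 1) ^ d - μ * Φ ^ (d + 1)) ∧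
      ρ * (Φ + 1) ^ d - μ * Φ ^ (d + 1) = (1 - μ) * Φ ^ (d + 1) :=
  max_at_phi_general d hd ρ Φ hΦpos hΦ
end

section
/- Let d be a positive integer, ρ ≥ 1, and Φ_{d,ρ} the unique positive root of ρ(x+1)^d = x^{d+1}. Then inf over μ ∈ (0,1) of max over x ≥ 0 of (ρ(x+1)^d − μ·x^{d+1})/(1−μ) equals Φ_{d,ρ}^{d+1}. -/
/-- AM-GM: `d` copies of `y^(d+1)` and one `b^(d+1)`. -/
lemma amgm_aux : ∀ (d : ℕ) (y b : ℝ), 0 ≤ y → 0 ≤ b →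
    ((d : ℝ) + 1) * (y ^ d * b) ≤ (d : ℝ) * y ^ (d + 1) + b ^ (d + 1) := by
  intro d
  induction d with
  | zero => intro y b hy hb; simp
  | succ n ih =>
    intro y b hy hb
    have h := ih y b hy hb
    have hmul : ((n : ℝ) + 1) * (y ^ n * b) * y ≤ ((n : ℝ) * y ^ (n + 1) + b ^ (n + 1)) * y :=
      mul_le_mul_of_nonneg_right h hy
    have hsign : 0 ≤ (b - y) * (b ^ (n + 1) - y ^ (n + 1)) := by
      rcases le_total y b with h' | h'
      · exact mul_nonneg (sub_nonneg.2 h') (sub_nonneg.2 (pow_le_pow_left₀ hy h' _))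
      · nlinarith [mul_nonneg (sub_nonneg.2 h') (sub_nonneg.2 (pow_le_pow_left₀ hb h' (n + 1)))]
    simp only [pow_succ] at hmul hsign ⊢
    push_cast
    nlinarith [hmul, hsign]

theorem inf_max_eq (d : ℕ) (hd : 0 < d) (ρ : ℝ) (hρ : 1 ≤ ρ)
    (Φ : ℝ) (hΦpos : 0 < Φ) (hΦ : ρ * (Φ + 1) ^ d = Φ ^ (d + 1)) :
    sInf {v : ℝ | ∃ μ : ℝ, 0 < μ ∧ μ < 1 ∧
        IsGreatest {w : ℝ | ∃ x : ℝ, 0 ≤ x ∧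
          w = (ρ * (x + 1) ^ d - μ * x ^ (d + 1)) / (1 - μ)} v}
      = Φ ^ (d + 1) := by
  have hΦ1 : (0 : ℝ) < Φ + 1 := by linarith
  set D : ℝ := (d : ℝ) with hD
  have hDpos : (0 : ℝ) < D := by rw [hD]; exact_mod_cast hd
  -- the optimum μ
  set μ : ℝ := D * Φ / ((D + 1) * (Φ + 1)) with hμdef
  have hμpos : 0 < μ := by positivity
  have hμlt : μ < 1 := by
    rw [hμdef, div_lt_one (by positivity)]
    nlinarith
  have h1μ : (0 : ℝ) < 1 - μ := by linarith
  -- at x = Φ the value is Φ^(d+1), for any μ' with μ' < 1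
  have hval : ∀ μ' : ℝ, μ' < 1 →
      (ρ * (Φ + 1) ^ d - μ' * Φ ^ (d + 1)) / (1 - μ') = Φ ^ (d + 1) := by
    intro μ' hμ'
    rw [hΦ, div_eq_iff (by linarith : (1 : ℝ) - μ' ≠ 0)]
    ring
  -- the key inequality: the max at μ is Φ^(d+1)
  have hkey : ∀ x : ℝ, 0 ≤ x →
      (ρ * (x + 1) ^ d - μ * x ^ (d + 1)) / (1 - μ) ≤ Φ ^ (d + 1) := by
    intro x hx
    rw [div_le_iff₀ h1μ]
    set y : ℝ := Φ * (x + 1) / (Φ + 1) with hy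
    have hy0 : 0 ≤ y := by positivity
    have hρx : ρ * (x + 1) ^ d = Φ * y ^ d := by
      have hρeq : ρ = Φ ^ (d + 1) / (Φ + 1) ^ d := by
        rw [eq_div_iff (by positivity : ((Φ + 1) ^ d : ℝ) ≠ 0)]
        exact hΦ
      rw [hρeq, hy, div_pow, mul_pow, pow_succ]
      field_simp
    have h1 : (D + 1) * (y ^ d * Φ) ≤ D * y ^ (d + 1) + Φ ^ (d + 1) :=
      amgm_aux d y Φ hy0 hΦpos.le
    -- convexity of t ↦ t^(d+1)
    have hlam : y = (Φ / (Φ + 1)) * x + (1 - Φ / (Φ + 1)) * Φ := by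
      rw [hy]; field_simp; ring
    have h2 : y ^ (d + 1) ≤ (Φ / (Φ + 1)) * x ^ (d + 1) + (1 - Φ / (Φ + 1)) * Φ ^ (d + 1) := by
      have hc : ((Φ / (Φ + 1)) • x + (1 - Φ / (Φ + 1)) • Φ) ^ (d + 1) ≤
          (Φ / (Φ + 1)) • x ^ (d + 1) + (1 - Φ / (Φ + 1)) • Φ ^ (d + 1) :=
        (convexOn_pow (d + 1)).2 (Set.mem_Ici.2 hx) (Set.mem_Ici.2 hΦpos.le)
        (by positivity)
        (by rw [sub_nonneg, div_le_one hΦ1]; linarith)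
        (by ring)
      simpa [smul_eq_mul, ← hlam] using hc
    -- combine
    have h3 : (D + 1) * (Φ * y ^ d) ≤
        D * ((Φ / (Φ + 1)) * x ^ (d + 1) + (1 - Φ / (Φ + 1)) * Φ ^ (d + 1)) + Φ ^ (d + 1) := by
      calc (D + 1) * (Φ * y ^ d) = (D + 1) * (y ^ d * Φ) := by ring
        _ ≤ D * y ^ (d + 1) + Φ ^ (d + 1) := h1
        _ ≤ _ := by nlinarith [h2, hDpos]
    have hμ1 : μ * (D + 1) = D * (Φ / (Φ + 1)) := by
      rw [hμdef]; field_simp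
    have hμ2 : (1 - μ) * (D + 1) = D * (1 - Φ / (Φ + 1)) + 1 := by
      rw [hμdef]; field_simp; ring
    rw [hρx]
    have hfin : (Φ * y ^ d - μ * x ^ (d + 1) - Φ ^ (d + 1) * (1 - μ)) * (D + 1) ≤ 0 := by
      have e1 := congrArg (· * x ^ (d + 1)) hμ1
      have e2 := congrArg (· * Φ ^ (d + 1)) hμ2
      nlinarith [h3, e1, e2]
    nlinarith [hfin, hDpos]
  -- Φ^(d+1) is the least element
  have hleast : IsLeast {v : ℝ | ∃ μ' : ℝ, 0 < μ' ∧ μ' < 1 ∧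
      IsGreatest {w : ℝ | ∃ x : ℝ, 0 ≤ x ∧
        w = (ρ * (x + 1) ^ d - μ' * x ^ (d + 1)) / (1 - μ')} v} (Φ ^ (d + 1)) := by
    constructor
    · exact ⟨μ, hμpos, hμlt, ⟨⟨Φ, hΦpos.le, (hval μ hμlt).symm⟩,
        fun w ⟨x, hx, hw⟩ => hw ▸ hkey x hx⟩⟩
    · rintro v ⟨μ', hμ'0, hμ'1, hvmem, hvub⟩
      exact hvub ⟨Φ, hΦpos.le, (hval μ' hμ'1).symm⟩
  exact hleast.csInf_eq
end

section
/- Let d be a positive integer. For any polynomial c of degree at most d with nonnegative coefficients, c(t) = Σ_{ν=0}^d a_ν t^ν, define φ(x) = a_0·x + Σ_{ν=1}^d a_ν(x^{ν+1} + ((ν+1)/2)x^ν). Then for all x ≥ 0 and w ≥ 1: w·c(x+w) ≤ φ(x+w) − φ(x) ≤ (d+1)·w·c(x+w). -/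
/-!
Each coefficient `a ν` contributes `a ν` times the increment of
`P ν t = t ^ (ν + 1) + (ν + 1) / 2 * t ^ ν` (for `ν = 0` this increment is `w`, as for `a 0 * t`).
With `y = x + w` and `S = ∑ i < ν, x ^ i * y ^ (ν - 1 - i)`, so that `y ^ ν - x ^ ν = w * S`,
the increment is `w * (y ^ ν + (x + (ν + 1) / 2) * S)`. Since `S ≥ 0` it is at least `w * y ^ ν`.
The upper bound reduces to `(2 * x + ν + 1) * S ≤ 2 * ν * y ^ ν`, which follows from the trapezoid
bound `2 * S ≤ ν * (x ^ (ν - 1) + y ^ (ν - 1))` (pair the terms `i` and `ν - 1 - i`), the crude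
bound `S ≤ ν * y ^ (ν - 1)`, and, because `w ≥ 1`, `S ≤ w * S = y ^ ν - x ^ ν` and `x + 1 ≤ y`.
-/
open Finset

section GeomSum

variable {R : Type*} [CommRing R] [LinearOrder R] [IsStrictOrderedRing R] {x y : R}

theorem pow_mul_pow_add_pow_mul_pow_le (hx : 0 ≤ x) (hxy : x ≤ y) (i j : ℕ) :
    x ^ i * y ^ j + y ^ i * x ^ j ≤ x ^ (i + j) + y ^ (i + j) := by
  have hi : 0 ≤ y ^ i - x ^ i := sub_nonneg.2 (pow_le_pow_left₀ hx hxy i)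
  have hj : 0 ≤ y ^ j - x ^ j := sub_nonneg.2 (pow_le_pow_left₀ hx hxy j)
  rw [pow_add, pow_add]
  linarith [mul_nonneg hi hj]

theorem geom_sum₂_le_card_mul_pow (hx : 0 ≤ x) (hxy : x ≤ y) (n : ℕ) :
    ∑ i ∈ range n, x ^ i * y ^ (n - 1 - i) ≤ n * y ^ (n - 1) := by
  rw [← geom_sum₂_self]
  exact sum_le_sum fun i _ => by gcongr; exact pow_nonneg (hx.trans hxy) _

theorem two_mul_geom_sum₂_le (hx : 0 ≤ x) (hxy : x ≤ y) (n : ℕ) :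
    2 * ∑ i ∈ range n, x ^ i * y ^ (n - 1 - i) ≤ n * (x ^ (n - 1) + y ^ (n - 1)) := by
  calc 2 * ∑ i ∈ range n, x ^ i * y ^ (n - 1 - i)
      = ∑ i ∈ range n, (x ^ i * y ^ (n - 1 - i) + y ^ i * x ^ (n - 1 - i)) := by
        rw [two_mul, sum_add_distrib, geom_sum₂_comm x y n]
    _ ≤ ∑ _i ∈ range n, (x ^ (n - 1) + y ^ (n - 1)) := by
        refine sum_le_sum fun i hi => ?_
        have : i + (n - 1 - i) = n - 1 := by have := mem_range.1 hi; omega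
        simpa only [this] using pow_mul_pow_add_pow_mul_pow_le hx hxy i (n - 1 - i)
    _ = n * (x ^ (n - 1) + y ^ (n - 1)) := by rw [sum_const, card_range, nsmul_eq_mul]

theorem add_mul_geom_sum₂_le (hx : 0 ≤ x) (hxy : x + 1 ≤ y) (n : ℕ) :
    (2 * x + n + 1) * ∑ i ∈ range n, x ^ i * y ^ (n - 1 - i) ≤ 2 * n * y ^ n := by
  have hxy' : x ≤ y := by linarith
  rcases n with _ | m
  · simp
  have hS : 0 ≤ ∑ i ∈ range (m + 1), x ^ i * y ^ (m + 1 - 1 - i) :=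
    sum_nonneg fun i _ => mul_nonneg (pow_nonneg hx _) (pow_nonneg (hx.trans hxy') _)
  have hdiff := geom_sum₂_mul_of_le hxy' (m + 1)
  have htrap := two_mul_geom_sum₂_le hx hxy' (m + 1)
  have hcrude := geom_sum₂_le_card_mul_pow hx hxy' (m + 1)
  simp only [Nat.add_sub_cancel] at hS hdiff htrap hcrude ⊢
  generalize ∑ i ∈ range (m + 1), x ^ i * y ^ (m - i) = S at *
  push_cast at htrap hcrude ⊢
  have hm : (0 : R) ≤ m + 1 := by positivity
  have hym : 0 ≤ y ^ m := pow_nonneg (hx.trans hxy') m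
  have hS_le : S ≤ y ^ (m + 1) - x ^ (m + 1) := by nlinarith
  have h1 := mul_le_mul_of_nonneg_left htrap hx
  have h2 := mul_le_mul_of_nonneg_left hS_le hm
  have h3 := mul_le_mul_of_nonneg_left hxy (mul_nonneg hm hym)
  rw [pow_succ x, pow_succ y] at *
  linarith

end GeomSum

section MonomialPotential

variable {K : Type*} [Field K] [LinearOrder K] [IsStrictOrderedRing K] {x y : K}

def monomialPotential (ν : ℕ) (t : K) : K := t ^ (ν + 1) + ((ν : K) + 1) / 2 * t ^ ν

theorem monomialPotential_sub (ν : ℕ) :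
    monomialPotential ν y - monomialPotential ν x =
      (y - x) * (y ^ ν + (x + ((ν : K) + 1) / 2) * ∑ i ∈ range ν, x ^ i * y ^ (ν - 1 - i)) := by
  have h := geom_sum₂_mul y x ν
  rw [geom_sum₂_comm] at h
  unfold monomialPotential
  linear_combination (-x - ((ν : K) + 1) / 2) * h

theorem mul_pow_le_monomialPotential_sub (hx : 0 ≤ x) (hxy : x ≤ y) (ν : ℕ) :
    (y - x) * y ^ ν ≤ monomialPotential ν y - monomialPotential ν x := by
  rw [monomialPotential_sub]
  have hS : 0 ≤ ∑ i ∈ range ν, x ^ i * y ^ (ν - 1 - i) :=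
    sum_nonneg fun i _ => mul_nonneg (pow_nonneg hx _) (pow_nonneg (hx.trans hxy) _)
  have : 0 ≤ (x + ((ν : K) + 1) / 2) * ∑ i ∈ range ν, x ^ i * y ^ (ν - 1 - i) := by positivity
  exact mul_le_mul_of_nonneg_left (le_add_of_nonneg_right this) (sub_nonneg.2 hxy)

theorem monomialPotential_sub_le (hx : 0 ≤ x) (hxy : x + 1 ≤ y) (ν : ℕ) :
    monomialPotential ν y - monomialPotential ν x ≤ (ν + 1) * ((y - x) * y ^ ν) := by
  rw [monomialPotential_sub]
  have h := add_mul_geom_sum₂_le hx hxy ν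
  have hyx : 0 ≤ y - x := by linarith
  linarith [mul_le_mul_of_nonneg_left h hyx]

end MonomialPotential

theorem faulhaber_potential_bounds_general (d : ℕ)
    (a : ℕ → ℝ) (ha : ∀ ν ≤ d, 0 ≤ a ν)
    (c : ℝ → ℝ) (hc : ∀ t, c t = ∑ ν ∈ Finset.range (d + 1), a ν * t ^ ν)
    (φ : ℝ → ℝ)
    (hφ : ∀ x, φ x = a 0 * x +
      ∑ ν ∈ Finset.Icc 1 d, a ν * (x ^ (ν + 1) + (((ν : ℝ) + 1) / 2) * x ^ ν))
    (x w : ℝ) (hx : 0 ≤ x) (hw : 1 ≤ w) :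
    w * c (x + w) ≤ φ (x + w) - φ x ∧
      φ (x + w) - φ x ≤ ((d : ℝ) + 1) * (w * c (x + w)) := by
  have hφ' : ∀ t, φ t = a 0 * t + ∑ ν ∈ Icc 1 d, a ν * monomialPotential ν t := hφ
  have hΔφ : φ (x + w) - φ x =
      ∑ ν ∈ range (d + 1), a ν * (monomialPotential ν (x + w) - monomialPotential ν x) := by
    rw [hφ', hφ', range_eq_Ico, sum_eq_sum_Ico_succ_bot d.succ_pos, Nat.succ_eq_add_one,
      zero_add, Ico_add_one_right_eq_Icc]
    simp only [monomialPotential, mul_sub, sum_sub_distrib]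
    ring
  have hwc : w * c (x + w) = ∑ ν ∈ range (d + 1), a ν * (w * (x + w) ^ ν) := by
    rw [hc, mul_sum]
    exact sum_congr rfl fun ν _ => by ring
  have hlow (ν : ℕ) :
      w * (x + w) ^ ν ≤ monomialPotential ν (x + w) - monomialPotential ν x := by
    simpa using mul_pow_le_monomialPotential_sub hx (by linarith : x ≤ x + w) ν
  have hup (ν : ℕ) :
      monomialPotential ν (x + w) - monomialPotential ν x ≤ (ν + 1) * (w * (x + w) ^ ν) := by
    simpa using monomialPotential_sub_le hx (by linarith : x + 1 ≤ x + w) ν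
  rw [hΔφ, hwc, mul_sum]
  constructor <;> refine sum_le_sum fun ν hν => ?_
  all_goals have hνd : ν ≤ d := Nat.lt_succ_iff.1 (mem_range.1 hν)
  · exact mul_le_mul_of_nonneg_left (hlow ν) (ha ν hνd)
  · have hνd' : (ν : ℝ) + 1 ≤ d + 1 := by exact_mod_cast Nat.succ_le_succ hνd
    rw [mul_left_comm]
    refine mul_le_mul_of_nonneg_left ((hup ν).trans ?_) (ha ν hνd)
    gcongr

theorem faulhaber_potential_bounds (d : ℕ) (hd : 0 < d)
    (a : ℕ → ℝ) (ha : ∀ ν ≤ d, 0 ≤ a ν)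
    (c : ℝ → ℝ) (hc : ∀ t, c t = ∑ ν ∈ Finset.range (d + 1), a ν * t ^ ν)
    (φ : ℝ → ℝ)
    (hφ : ∀ x, φ x = a 0 * x +
      ∑ ν ∈ Finset.Icc 1 d, a ν * (x ^ (ν + 1) + (((ν : ℝ) + 1) / 2) * x ^ ν))
    (x w : ℝ) (hx : 0 ≤ x) (hw : 1 ≤ w) :
    w * c (x + w) ≤ φ (x + w) - φ x ∧
      φ (x + w) - φ x ≤ ((d : ℝ) + 1) * (w * c (x + w)) :=
  faulhaber_potential_bounds_general d a ha c hc φ hφ x w hx hw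
end

section
/- Let d be a positive integer and ρ ≥ 1, and let Φ_{d,ρ} be the unique positive root of ρ(x+1)^d = x^{d+1}. Then Φ_{d,ρ}^{d+1} ≤ (d / W(d/ρ))^{d+1}, where W is the principal branch of the Lambert-W function. -/
/-!
The map `x ↦ x^(d+1) / (x+1)^d = x (x/(x+1))^d` is strictly increasing on `(0, ∞)` and equals `ρ`
at `Φ`. Since `ρ = d / (W e^W)`, it suffices that its value at `d / W`, namely `(d/W) / (1 + W/d)^d`,
is at least `d / (W e^W)`, which is `(1 + W/d)^d ≤ e^W`.
-/

open Real

lemma strictMonoOn_pow_succ_div_add_one_pow (d : ℕ) :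
    StrictMonoOn (fun x : ℝ => x ^ (d + 1) / (x + 1) ^ d) (Set.Ioi 0) := by
  intro a (ha : 0 < a) b (hb : 0 < b) hab
  have factor (x : ℝ) : x ^ (d + 1) / (x + 1) ^ d = x * (x / (x + 1)) ^ d := by
    rw [div_pow, pow_succ]; ring
  have hfrac : a / (a + 1) < b / (b + 1) := by
    rw [div_lt_div_iff₀ (by positivity) (by positivity)]; linarith
  simp only [factor a, factor b]
  exact mul_lt_mul_of_lt_of_le_of_nonneg_of_pos hab
    (pow_le_pow_left₀ (by positivity) hfrac.le d) ha.le (by positivity)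

lemma one_add_div_pow_le_exp {n : ℕ} {t : ℝ} (ht : -n ≤ t) : (1 + t / n) ^ n ≤ exp t := by
  simpa [sub_eq_add_neg, neg_div] using one_sub_div_pow_le_exp_neg (n := n) (t := -t) (by linarith)

lemma div_mul_exp_le_pow_succ_div_add_one_pow {d : ℕ} (hd : 0 < d) {W : ℝ} (hW : 0 < W) :
    d / (W * exp W) ≤ (d / W) ^ (d + 1) / (d / W + 1) ^ d := by
  have hd' : (0 : ℝ) < d := by exact_mod_cast hd
  have hsplit : (d / W) ^ (d + 1) / (d / W + 1) ^ d = (d / W) / (1 + W / d) ^ d := by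
    rw [div_add_one hW.ne', one_add_div hd'.ne', div_pow, div_pow, div_pow, pow_succ]
    field_simp
    ring
  rw [hsplit, ← div_div]
  exact div_le_div_of_nonneg_left (by positivity) (by positivity)
    (one_add_div_pow_le_exp (by linarith))

theorem poa_lambertW_bound_general (d : ℕ) (hd : 0 < d) (ρ : ℝ)
    (Φ W : ℝ) (hΦpos : 0 < Φ) (hΦ : ρ * (Φ + 1) ^ d = Φ ^ (d + 1))
    (hW : W * Real.exp W = d / ρ) :
    Φ ^ (d + 1) ≤ ((d : ℝ) / W) ^ (d + 1) := by
  have hρΦ : ρ = Φ ^ (d + 1) / (Φ + 1) ^ d := eq_div_of_mul_eq (by positivity) hΦ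
  have hρpos : 0 < ρ := hρΦ ▸ by positivity
  have hWpos : 0 < W :=
    pos_of_mul_pos_left (hW ▸ div_pos (by exact_mod_cast hd) hρpos) (exp_pos W).le
  have hρW : ρ = d / (W * exp W) := by rw [hW, div_div_cancel₀ (by exact_mod_cast hd.ne')]
  have hΦle : Φ ≤ d / W := by
    refine (strictMonoOn_pow_succ_div_add_one_pow d).le_iff_le hΦpos
      (show (0 : ℝ) < d / W by positivity) |>.mp ?_
    rw [← hρΦ, hρW]
    exact div_mul_exp_le_pow_succ_div_add_one_pow hd hWpos
  exact pow_le_pow_left₀ hΦpos.le hΦle _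

theorem poa_lambertW_bound (d : ℕ) (hd : 0 < d) (ρ : ℝ) (hρ : 1 ≤ ρ)
    (Φ W : ℝ) (hΦpos : 0 < Φ) (hΦ : ρ * (Φ + 1) ^ d = Φ ^ (d + 1))
    (hWpos : 0 ≤ W) (hW : W * Real.exp W = d / ρ) :
    Φ ^ (d + 1) ≤ ((d : ℝ) / W) ^ (d + 1) :=
  poa_lambertW_bound_general d hd ρ Φ W hΦpos hΦ hW
end

section
/- Let d be a positive integer and define p = (2d+3)(d+1)(4d)^{d+1} and α = d+1. Let Φ_{d,ρ} denote the unique positive root of ρ(x+1)^d = x^{d+1}. Then p ≥ (2α+1)·α·Φ_{d, α+1/p}^{d+1}. -/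
/-!
The map `x ↦ x ^ (d + 1) / (x + 1) ^ d` is increasing on `[0, ∞)`, so `Φ_{d,ρ}` lies below every
`y > 0` with `ρ (y + 1) ^ d < y ^ (d + 1)`. For `ρ = α + 1/p ≤ d + 2` the point `y = 4d` is such a `y`
by Bernoulli's inequality, and then `(2α + 1) α Φ ^ (d + 1) ≤ (2d + 3)(d + 1)(4d) ^ (d + 1) = p`.
-/

lemma lt_of_mul_add_one_pow_eq_of_mul_add_one_pow_lt {ρ x y : ℝ} {n : ℕ} (hy : 0 ≤ y)
    (hx : ρ * (x + 1) ^ n = x ^ (n + 1)) (hρy : ρ * (y + 1) ^ n < y ^ (n + 1)) : x < y := by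
  by_contra! hyx
  have hx0 : 0 ≤ x := hy.trans hyx
  have hxy : y * (x + 1) ≤ x * (y + 1) := by linarith
  have hpow : y ^ (n + 1) * (x + 1) ^ n ≤ x ^ (n + 1) * (y + 1) ^ n :=
    calc y ^ (n + 1) * (x + 1) ^ n = y * (y * (x + 1)) ^ n := by rw [mul_pow]; ring
      _ ≤ x * (x * (y + 1)) ^ n :=
        mul_le_mul hyx (pow_le_pow_left₀ (by positivity) hxy n) (by positivity) hx0
      _ = x ^ (n + 1) * (y + 1) ^ n := by rw [mul_pow]; ring
  have hxy' : ρ * (y + 1) ^ n * (x + 1) ^ n = x ^ (n + 1) * (y + 1) ^ n := by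
    rw [mul_right_comm, hx]
  linarith [mul_lt_mul_of_pos_right hρy (pow_pos (by linarith) n : (0 : ℝ) < (x + 1) ^ n)]

/-- Bernoulli's inequality `(1 - 1/(m+1)) ^ n ≥ 1 - n/(m+1)`, cleared of denominators. -/
lemma add_one_pow_mul_sub_le (m : ℝ) (hm : 0 ≤ m) (n : ℕ) :
    (m + 1) ^ n * (m + 1 - n) ≤ m ^ n * (m + 1) := by
  have hm1 : 0 < m + 1 := by linarith
  have hbern := one_add_mul_le_pow (a := -(m + 1)⁻¹) (by
    have : (m + 1)⁻¹ ≤ 1 := inv_le_one_of_one_le₀ (by linarith)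
    linarith) n
  have hbase : 1 + -(m + 1)⁻¹ = m / (m + 1) := by field_simp; ring
  rw [hbase, div_pow, le_div_iff₀ (by positivity)] at hbern
  have hlhs : (1 + n * -(m + 1)⁻¹) * (m + 1) ^ n * (m + 1) = (m + 1) ^ n * (m + 1 - n) := by
    field_simp; ring
  nlinarith

lemma add_two_mul_four_mul_add_one_pow_lt {d : ℕ} (hd : 0 < d) :
    ((d : ℝ) + 2) * (4 * d + 1) ^ d < (4 * d) ^ (d + 1) := by
  have hd1 : (1 : ℝ) ≤ d := by exact_mod_cast hd
  have hbern := add_one_pow_mul_sub_le (4 * d) (by positivity) d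
  have hquad : ((d : ℝ) + 2) * (4 * d + 1) < 4 * d * (3 * d + 1) := by nlinarith
  have hpos : (0 : ℝ) < (4 * d) ^ d := by positivity
  have hpos' : (0 : ℝ) < (4 * d + 1) ^ d := by positivity
  -- Scale Bernoulli by `d + 2` and `hquad` by `(4d) ^ d`, then cancel the common factor `3d + 1`.
  rw [pow_succ]
  nlinarith

theorem p_property (d : ℕ) (hd : 0 < d) :
    let p : ℝ := (2 * d + 3) * (d + 1) * (4 * d) ^ (d + 1)
    let α : ℝ := d + 1
    ∀ Φ : ℝ, 0 < Φ → (α + 1 / p) * (Φ + 1) ^ d = Φ ^ (d + 1) →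
      (2 * α + 1) * α * Φ ^ (d + 1) ≤ p := by
  intro p α Φ hΦ hroot
  have hp : 1 ≤ p := by
    have h4d : (1 : ℝ) ≤ 4 * d := by norm_cast; omega
    refine one_le_mul_of_one_le_of_one_le (one_le_mul_of_one_le_of_one_le ?_ ?_) (one_le_pow₀ h4d)
      <;> linarith
  have hρ : α + 1 / p ≤ d + 2 := by
    have : 1 / p ≤ 1 := by rw [div_le_one (by positivity)]; exact hp
    simp only [α]; linarith
  have hlt : (α + 1 / p) * (4 * d + 1) ^ d < (4 * d) ^ (d + 1) :=
    (mul_le_mul_of_nonneg_right hρ (by positivity)).trans_lt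
      (add_two_mul_four_mul_add_one_pow_lt hd)
  have hΦ4d : Φ < 4 * d :=
    lt_of_mul_add_one_pow_eq_of_mul_add_one_pow_lt (by positivity) hroot hlt
  calc (2 * α + 1) * α * Φ ^ (d + 1) ≤ (2 * α + 1) * α * (4 * d) ^ (d + 1) := by
        gcongr
    _ = p := by simp only [α, p]; ring
end

section
/- Fix a positive integer d, ρ ≥ 1, and reals λ and μ ∈ (0, 1/ρ) such that for all x, y, z ≥ 0 and every polynomial f of degree at most d with nonnegative coefficients: y·f(z+x+y) ≤ λ·y·f(z+y) + μ·x·f(z+x). Then λρ/(1−μρ) ≥ Φ_{d,ρ}^{d+1}, where Φ_{d,ρ} is the unique positive root of ρ(x+1)^d = x^{d+1}. -/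
theorem smoothness_lower (d : ℕ) (hd : 0 < d) (ρ : ℝ) (hρ : 1 ≤ ρ)
    (lam μ : ℝ) (hμ0 : 0 < μ) (hμ1 : μ < 1 / ρ)
    (hsmooth : ∀ a : ℕ → ℝ, (∀ i ≤ d, 0 ≤ a i) →
      ∀ x y z : ℝ, 0 ≤ x → 0 ≤ y → 0 ≤ z →
        y * (∑ i ∈ Finset.range (d + 1), a i * (z + x + y) ^ i) ≤
          lam * y * (∑ i ∈ Finset.range (d + 1), a i * (z + y) ^ i) +
          μ * x * (∑ i ∈ Finset.range (d + 1), a i * (z + x) ^ i))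
    (Φ : ℝ) (hΦpos : 0 < Φ) (hΦ : ρ * (Φ + 1) ^ d = Φ ^ (d + 1)) :
    Φ ^ (d + 1) ≤ lam * ρ / (1 - μ * ρ) := by
  have hρ0 : (0 : ℝ) < ρ := lt_of_lt_of_le one_pos hρ
  have h := hsmooth (fun i => if i = d then 1 else 0)
    (fun i _ => by split <;> norm_num) Φ 1 0 hΦpos.le zero_le_one le_rfl
  have hsum : ∀ t : ℝ,
      (∑ i ∈ Finset.range (d + 1), (if i = d then (1:ℝ) else 0) * t ^ i) = t ^ d := by
    intro t
    rw [Finset.sum_eq_single d]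
    · simp
    · intro b _ hb; simp [hb]
    · intro hmem; exact absurd (Finset.self_mem_range_succ d) hmem
  simp only [hsum] at h
  have h' : (Φ + 1) ^ d ≤ lam + μ * Φ ^ (d + 1) := by
    have : (0:ℝ) + Φ + 1 = Φ + 1 := by ring
    rw [this] at h
    calc (Φ + 1) ^ d = 1 * (Φ + 1)^d := by ring
      _ ≤ lam * 1 * (0 + 1)^d + μ * Φ * (0 + Φ)^d := h
      _ = lam + μ * Φ ^ (d + 1) := by rw [pow_succ]; ring
  have hμρ : μ * ρ < 1 := by
    rw [lt_div_iff₀ hρ0] at hμ1; linarith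
  rw [le_div_iff₀ (by linarith : (0:ℝ) < 1 - μ * ρ)]
  nlinarith [hΦ, h', hρ0]
end

section
/- Let d be a positive integer, ρ ≥ 1, and Φ = Φ_{d,ρ} the unique positive root of ρ(x+1)^d = x^{d+1}. With μ̂ = dΦ/((d+1)(Φ+1)) and λ̂ = (1−μ̂)Φ^{d+1}/ρ, for all x, y ≥ 0 and every monomial f(t) = t^ν with 0 ≤ ν ≤ d: y·f(x+y) ≤ λ̂·y·f(y) + μ̂·x·f(x). -/
/-!
Weighted AM-GM for `x + y` and `(Φ + 1) y` with weights `ν : 1`, followed by convexity of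
`t ↦ t ^ (ν + 1)` at the points `(Φ + 1) x / Φ` and `(Φ + 1) y` with weights `Φ / (Φ + 1)` and
`1 / (Φ + 1)`, gives
`(ν + 1)(Φ + 1) · y (x + y)^ν ≤ ν ((Φ + 1) / Φ)^ν x^(ν+1) + (ν + Φ + 1)(Φ + 1)^ν y^(ν+1)`.
Since `ρ ≥ 1`, the defining equation of `Φ` gives `((Φ + 1) / Φ)^d ≤ Φ`, which bounds the
coefficient of `x^(ν+1)` by `(ν + 1)(Φ + 1) μ̂`; Bernoulli's inequality
`(Φ + 1)^(d - ν) ≥ 1 + (d - ν) Φ` bounds that of `y^(ν+1)` by `(ν + 1)(Φ + 1) λ̂`, where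
`λ̂ = (1 - μ̂)(Φ + 1)^d`.
-/

lemma succ_mul_pow_mul_le_add_pow (n : ℕ) {z w : ℝ} (hz : 0 ≤ z) (hw : 0 ≤ w) :
    (n + 1) * (z ^ n * w) ≤ n * z ^ (n + 1) + w ^ (n + 1) := by
  rcases hz.eq_or_lt with rfl | hz
  · rcases n.eq_zero_or_pos with rfl | hn
    · simp
    · simp [zero_pow hn.ne', pow_nonneg hw]
  obtain ⟨t, rfl⟩ : ∃ t, w = z * t := ⟨w / z, by field_simp⟩
  have bernoulli := one_add_mul_le_pow (a := t - 1) (by nlinarith [hw]) (n + 1)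
  rw [add_sub_cancel] at bernoulli
  push_cast at bernoulli
  calc (n + 1) * (z ^ n * (z * t)) = z ^ (n + 1) * (1 + (n + 1) * (t - 1)) + n * z ^ (n + 1) := by
        ring
    _ ≤ z ^ (n + 1) * t ^ (n + 1) + n * z ^ (n + 1) := by gcongr
    _ = n * z ^ (n + 1) + (z * t) ^ (n + 1) := by ring

lemma add_pow_succ_le_of_inv_add_inv_eq_one {p q : ℝ} (hp : 0 < p) (hq : 0 < q)
    (hpq : p⁻¹ + q⁻¹ = 1) (n : ℕ) {x y : ℝ} (hx : 0 ≤ x) (hy : 0 ≤ y) :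
    (x + y) ^ (n + 1) ≤ p ^ n * x ^ (n + 1) + q ^ n * y ^ (n + 1) := by
  have jensen := (convexOn_pow (n + 1)).2 (Set.mem_Ici.2 (mul_nonneg hp.le hx))
    (Set.mem_Ici.2 (mul_nonneg hq.le hy)) (inv_nonneg.2 hp.le) (inv_nonneg.2 hq.le) hpq
  simp only [smul_eq_mul, inv_mul_cancel_left₀ hp.ne', inv_mul_cancel_left₀ hq.ne'] at jensen
  calc (x + y) ^ (n + 1) ≤ p⁻¹ * (p * x) ^ (n + 1) + q⁻¹ * (q * y) ^ (n + 1) := jensen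
    _ = p ^ n * x ^ (n + 1) + q ^ n * y ^ (n + 1) := by
        rw [mul_pow, mul_pow, pow_succ p, pow_succ q]
        field_simp

lemma succ_mul_mul_mul_add_pow_le {a : ℝ} (ha : 0 < a) (n : ℕ) {x y : ℝ} (hx : 0 ≤ x)
    (hy : 0 ≤ y) :
    (n + 1) * (a + 1) * (y * (x + y) ^ n)
      ≤ n * ((a + 1) / a) ^ n * x ^ (n + 1) + (n + a + 1) * (a + 1) ^ n * y ^ (n + 1) := by
  have hconj : ((a + 1) / a)⁻¹ + (a + 1)⁻¹ = 1 := by field_simp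
  have convexity := add_pow_succ_le_of_inv_add_inv_eq_one (by positivity) (by positivity)
    hconj n hx hy
  calc (n + 1) * (a + 1) * (y * (x + y) ^ n) = (n + 1) * ((x + y) ^ n * ((a + 1) * y)) := by ring
    _ ≤ n * (x + y) ^ (n + 1) + ((a + 1) * y) ^ (n + 1) :=
        succ_mul_pow_mul_le_add_pow n (by positivity) (by positivity)
    _ ≤ n * (((a + 1) / a) ^ n * x ^ (n + 1) + (a + 1) ^ n * y ^ (n + 1))
          + ((a + 1) * y) ^ (n + 1) := by gcongr
    _ = n * ((a + 1) / a) ^ n * x ^ (n + 1) + (n + a + 1) * (a + 1) ^ n * y ^ (n + 1) := by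
        rw [mul_pow, pow_succ (a + 1)]
        ring

lemma nat_mul_add_one_div_pow_le {Φ : ℝ} (hΦ : 0 < Φ) {n d : ℕ} (hn : n ≤ d)
    (hgrowth : (Φ + 1) ^ d ≤ Φ ^ (d + 1)) :
    n * ((Φ + 1) / Φ) ^ n ≤ (n + 1) * d * Φ / (d + 1) := by
  have hbase : 1 ≤ (Φ + 1) / Φ := by rw [le_div_iff₀ hΦ]; linarith
  have hpow_d : ((Φ + 1) / Φ) ^ d ≤ Φ := by
    rw [div_pow, div_le_iff₀ (by positivity), ← pow_succ']
    exact hgrowth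
  have hnd : (n : ℝ) ≤ d := by exact_mod_cast hn
  calc n * ((Φ + 1) / Φ) ^ n ≤ n * Φ := by
        gcongr
        exact (pow_le_pow_right₀ hbase hn).trans hpow_d
    _ ≤ (n + 1) * d * Φ / (d + 1) := by
        rw [le_div_iff₀ (by positivity)]
        nlinarith

lemma add_add_one_mul_add_one_pow_le {Φ : ℝ} (hΦ : 0 ≤ Φ) {n d : ℕ} (hn : n ≤ d) :
    (n + Φ + 1) * (Φ + 1) ^ n ≤ (n + 1) * (Φ + d + 1) * (Φ + 1) ^ d / (d + 1) := by
  obtain ⟨k, rfl⟩ := Nat.exists_eq_add_of_le hn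
  have bernoulli : 1 + k * Φ ≤ (Φ + 1) ^ k := by
    rw [add_comm Φ]
    exact one_add_mul_le_pow (by linarith) k
  have scalar : ((n : ℝ) + Φ + 1) * (n + k + 1) ≤ (n + 1) * (Φ + (n + k) + 1) * (1 + k * Φ) := by
    have slack : 0 ≤ k * Φ * (n * (Φ + n + k + 1) + Φ + n + k) := by positivity
    linear_combination slack
  rw [le_div_iff₀ (by positivity), pow_add]
  push_cast
  calc (n + Φ + 1) * (Φ + 1) ^ n * (n + k + 1) = ((n + Φ + 1) * (n + k + 1)) * (Φ + 1) ^ n := by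
        ring
    _ ≤ ((n + 1) * (Φ + (n + k) + 1) * (1 + k * Φ)) * (Φ + 1) ^ n := by gcongr
    _ ≤ ((n + 1) * (Φ + (n + k) + 1) * (Φ + 1) ^ k) * (Φ + 1) ^ n := by gcongr
    _ = (n + 1) * (Φ + (n + k) + 1) * ((Φ + 1) ^ n * (Φ + 1) ^ k) := by ring

theorem smoothness_witness_general (d : ℕ) (ρ : ℝ) (hρ : 1 ≤ ρ)
    (Φ : ℝ) (hΦpos : 0 < Φ) (hΦ : ρ * (Φ + 1) ^ d = Φ ^ (d + 1)) :
    let μ := (d : ℝ) * Φ / (((d : ℝ) + 1) * (Φ + 1))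
    let lam := (1 - μ) * Φ ^ (d + 1) / ρ
    ∀ ν : ℕ, ν ≤ d → ∀ x y : ℝ, 0 ≤ x → 0 ≤ y →
      y * (x + y) ^ ν ≤ lam * y * y ^ ν + μ * x * x ^ ν := by
  intro μ lam ν hν x y hx hy
  have hgrowth : (Φ + 1) ^ d ≤ Φ ^ (d + 1) := hΦ ▸ le_mul_of_one_le_left (by positivity) hρ
  have hμ : (ν + 1) * (Φ + 1) * μ = (ν + 1) * d * Φ / (d + 1) := by
    simp only [μ]
    field_simp
  have hlam : (ν + 1) * (Φ + 1) * lam = (ν + 1) * (Φ + d + 1) * (Φ + 1) ^ d / (d + 1) := by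
    simp only [lam, μ, ← hΦ]
    field_simp
    ring
  refine le_of_mul_le_mul_left ?_ (by positivity : (0 : ℝ) < (ν + 1) * (Φ + 1))
  calc (ν + 1) * (Φ + 1) * (y * (x + y) ^ ν)
      ≤ ν * ((Φ + 1) / Φ) ^ ν * x ^ (ν + 1) + (ν + Φ + 1) * (Φ + 1) ^ ν * y ^ (ν + 1) :=
        succ_mul_mul_mul_add_pow_le hΦpos ν hx hy
    _ ≤ (ν + 1) * (Φ + 1) * μ * x ^ (ν + 1) + (ν + 1) * (Φ + 1) * lam * y ^ (ν + 1) := by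
        rw [hμ, hlam]
        gcongr
        · exact nat_mul_add_one_div_pow_le hΦpos hν hgrowth
        · exact add_add_one_mul_add_one_pow_le hΦpos.le hν
    _ = (ν + 1) * (Φ + 1) * (lam * y * y ^ ν + μ * x * x ^ ν) := by ring

theorem smoothness_witness (d : ℕ) (hd : 0 < d) (ρ : ℝ) (hρ : 1 ≤ ρ)
    (Φ : ℝ) (hΦpos : 0 < Φ) (hΦ : ρ * (Φ + 1) ^ d = Φ ^ (d + 1)) :
    let μ := (d : ℝ) * Φ / (((d : ℝ) + 1) * (Φ + 1))
    let lam := (1 - μ) * Φ ^ (d + 1) / ρ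
    ∀ ν : ℕ, ν ≤ d → ∀ x y : ℝ, 0 ≤ x → 0 ≤ y →
      y * (x + y) ^ ν ≤ lam * y * y ^ ν + μ * x * x ^ ν :=
  smoothness_witness_general d ρ hρ Φ hΦpos hΦ
end
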